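/- arXiv:1207.6664 — 2 statements merged into one kernel-verified Lean document; each statement's English description precedes it below -/
import Mathlib

section
/- Let $E,F$ be Banach spaces (over the real or complex field) and fix $p^*\in(1,\infty)$. Let $(r_1,q_1)$ and $(r_2,q_2)$ be pairs with $r_k\in[1,\infty)$, $q_k\in(1,\infty)$ and $1/r_k = 1/q_k + 1/p^*$ for $k=1,2$. Then a bounded linear operator $T:E\to F$ satisfies, for some $C\ge 0$, $(\sum_{i=1}^m|\varphi_i(T(x_i))|^{r_1})^{1/r_1} \le C\,(\sum_{i=1}^m\|x_i\|^{q_1})^{1/q_1}\,\|(\varphi_i)_{i=1}^m\|_{w,p^*}$ for all $m\in\mathbb{N}$, $x_i\in E$, $\varphi_i\in F'$, if and only if it satisfies the analogous inequality with $(r_2,q_2)$ in place of $(r_1,q_1)$ for some $C\ge 0$. -/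
/-!
Fix `φ` and put `aᵢ = ‖φᵢ (T xᵢ)‖`, `bᵢ = ‖xᵢ‖`. Replacing `xᵢ` by `tᵢ • xᵢ` multiplies both
sequences by `t`, so an `(r, q)` bound with constant `K = C · ‖φ‖_{w,p*}` gives
`‖t a‖_r ≤ K ‖t b‖_q` for every `t ≥ 0`, and it suffices to pass this scale-invariant inequality
from `(r, q)` to `(r', q')` when `1/r - 1/q = 1/r' - 1/q'`. Let `1/s = |1/q - 1/q'|`.
If `q < q'`, take `t = a^{r'/s}`: then `‖t a‖_r = A^{1/r}` with `A = ∑ a^{r'}`, while Hölder gives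
`‖t b‖_q ≤ A^{1/s} ‖b‖_{q'}`; divide by `A^{1/s}`.
If `q > q'`, take `t = b^{q'/q - 1}`: then `‖t b‖_q = ‖b‖_{q'}^{q'/q}`, and Hölder applied to
`a = (t a) · b^{q'/s}` gives the claim.
-/

open scoped BigOperators

/-- The weak `q`-norm of a finite family of continuous linear functionals on `F`. -/
noncomputable def weakNorm {𝕜 F : Type*} [RCLike 𝕜] [NormedAddCommGroup F] [NormedSpace 𝕜 F]
    {ι : Type*} [Fintype ι] (q : ℝ) (φ : ι → F →L[𝕜] 𝕜) : ℝ :=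
  ⨆ y : Metric.closedBall (0 : F) 1, (∑ i, ‖φ i (y : F)‖ ^ q) ^ (1 / q)

open scoped NNReal

lemma Real.holderTriple_inv_sub_inv {q q' : ℝ} (hq : 0 < q) (h : q < q') :
    (q⁻¹ - q'⁻¹)⁻¹.HolderTriple q' q where
  inv_add_inv_eq_inv := by rw [inv_inv, sub_add_cancel]
  left_pos := inv_pos.2 (sub_pos.2 (inv_strictAnti₀ hq h))
  right_pos := hq.trans h

section FinLpNorm

variable {ι : Type*} [Fintype ι]

noncomputable def finLpNorm (p : ℝ) (f : ι → ℝ≥0) : ℝ≥0 :=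
  (∑ i, f i ^ p) ^ (1 / p)

lemma finLpNorm_rpow_div {p : ℝ} (hp : p ≠ 0) (c : ℝ) (g : ι → ℝ≥0) :
    finLpNorm p (fun i => g i ^ (c / p)) = (∑ i, g i ^ c) ^ (1 / p) := by
  simp only [finLpNorm, ← NNReal.rpow_mul, div_mul_cancel₀ c hp]

lemma finLpNorm_single [DecidableEq ι] {p : ℝ} (hp : p ≠ 0) (i : ι) (c : ℝ≥0) :
    finLpNorm p (Pi.single i c) = c := by
  rw [finLpNorm, Fintype.sum_eq_single i fun j hj => by simp [hj, NNReal.zero_rpow hp],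
    Pi.single_eq_same, NNReal.rpow_inv_rpow_self hp]

lemma finLpNorm_mul_le {p q r : ℝ} (hpqr : p.HolderTriple q r) (f g : ι → ℝ≥0) :
    finLpNorm r (f * g) ≤ finLpNorm p f * finLpNorm q g :=
  NNReal.Lr_le_Lp_mul_Lq _ f g hpqr

lemma coe_finLpNorm_nnnorm {E : Type*} [SeminormedAddCommGroup E] (p : ℝ) (v : ι → E) :
    (finLpNorm p (fun i => ‖v i‖₊) : ℝ) = (∑ i, ‖v i‖ ^ p) ^ (1 / p) := by
  simp [finLpNorm]

end FinLpNorm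

def ScaledDominated {ι : Type*} [Fintype ι] (r q : ℝ) (K : ℝ≥0) (a b : ι → ℝ≥0) : Prop :=
  ∀ t : ι → ℝ≥0, finLpNorm r (t * a) ≤ K * finLpNorm q (t * b)

namespace ScaledDominated

variable {ι : Type*} [Fintype ι] {r q : ℝ} {K : ℝ≥0} {a b : ι → ℝ≥0}

lemma le_mul (h : ScaledDominated r q K a b) (hr : r ≠ 0) (hq : q ≠ 0) (i : ι) :
    a i ≤ K * b i := by
  classical
  have := h (Pi.single i 1)
  rwa [← Pi.single_mul_left, ← Pi.single_mul_left, one_mul, one_mul, finLpNorm_single hr,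
    finLpNorm_single hq] at this

lemma finLpNorm_le_of_lt {r' q' s : ℝ} (h : ScaledDominated r q K a b)
    (hq : s.HolderTriple q' q) (hr : s.HolderTriple r' r) :
    finLpNorm r' a ≤ K * finLpNorm q' b := by
  obtain ⟨hs, hq', -⟩ := hq.all_pos
  obtain ⟨-, hr', hr0⟩ := hr.all_pos
  set A := ∑ i, a i ^ r'
  have hexp : r' / s + 1 = r' / r := by
    have := hr.one_div_eq
    field_simp at this ⊢
    linarith
  have hta : (fun i => a i ^ (r' / s)) * a = fun i => a i ^ (r' / r) := by
    ext1 i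
    simp only [Pi.mul_apply, ← hexp, NNReal.rpow_add_one' (by rw [hexp]; positivity)]
  have key : A ^ (1 / r') * A ^ (1 / s) ≤ K * finLpNorm q' b * A ^ (1 / s) :=
    calc A ^ (1 / r') * A ^ (1 / s) = A ^ (1 / r) := by
          rw [← NNReal.rpow_add' (by positivity), add_comm, hr.one_div_eq]
      _ = finLpNorm r ((fun i => a i ^ (r' / s)) * a) := by
          rw [hta, finLpNorm_rpow_div hr0.ne']
      _ ≤ K * finLpNorm q ((fun i => a i ^ (r' / s)) * b) := h _
      _ ≤ K * (finLpNorm s (fun i => a i ^ (r' / s)) * finLpNorm q' b) := by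
          gcongr; exact finLpNorm_mul_le hq _ _
      _ = K * finLpNorm q' b * A ^ (1 / s) := by
          rw [finLpNorm_rpow_div hs.ne']; ring
  rcases eq_or_ne A 0 with hA | hA
  · change A ^ (1 / r') ≤ _
    rw [hA, NNReal.zero_rpow (by positivity)]
    positivity
  · exact le_of_mul_le_mul_right key (NNReal.rpow_pos (pos_iff_ne_zero.2 hA))

lemma finLpNorm_le_of_gt {r' q' s : ℝ} (h : ScaledDominated r q K a b)
    (hq : q.HolderTriple s q') (hr : r.HolderTriple s r') :
    finLpNorm r' a ≤ K * finLpNorm q' b := by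
  obtain ⟨hq0, hs, hq'⟩ := hq.all_pos
  set t : ι → ℝ≥0 := fun i => b i ^ (q' / q - 1)
  set u : ι → ℝ≥0 := fun i => b i ^ (q' / s)
  have hexp : q' / q - 1 + q' / s = 0 := by
    have := hq.one_div_eq
    field_simp at this ⊢
    linarith
  have htb : t * b = fun i => b i ^ (q' / q) := by
    ext1 i
    rw [Pi.mul_apply, ← NNReal.rpow_add_one' (by rw [sub_add_cancel]; positivity), sub_add_cancel]
  -- where `b i = 0` the factor `t i * u i` is `0`, not `1`, but then `a i = 0` by `le_mul`
  have ha : a = t * a * u := by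
    ext1 i
    rcases eq_or_ne (b i) 0 with hb | hb
    · have := h.le_mul hr.pos.ne' hq0.ne' i
      simp_all
    · simp only [t, u, Pi.mul_apply]
      rw [mul_right_comm, ← NNReal.rpow_add hb, hexp, NNReal.rpow_zero, one_mul]
  calc finLpNorm r' a = finLpNorm r' (t * a * u) := by rw [← ha]
    _ ≤ finLpNorm r (t * a) * finLpNorm s u := finLpNorm_mul_le hr _ _
    _ ≤ K * finLpNorm q (t * b) * finLpNorm s u := by gcongr; exact h t
    _ = K * finLpNorm q' b := by
        rw [htb, finLpNorm_rpow_div hq0.ne', finLpNorm_rpow_div hs.ne', mul_assoc,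
          ← NNReal.rpow_add' (by positivity), hq.one_div_add_one_div]
        rfl

lemma finLpNorm_le {p r' q' : ℝ} (h : ScaledDominated r q K a b) (hr : 0 < r) (hq : 0 < q)
    (hr' : 0 < r') (hq' : 0 < q') (e : 1 / r = 1 / q + 1 / p) (e' : 1 / r' = 1 / q' + 1 / p) :
    finLpNorm r' a ≤ K * finLpNorm q' b := by
  have hdiff : r⁻¹ - r'⁻¹ = q⁻¹ - q'⁻¹ := by simp only [one_div] at e e'; linarith
  rcases lt_trichotomy q q' with hlt | rfl | hgt
  · have hrr : r < r' := (inv_lt_inv₀ hr' hr).1 (by linarith [inv_strictAnti₀ hq hlt])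
    exact h.finLpNorm_le_of_lt (Real.holderTriple_inv_sub_inv hq hlt)
      (hdiff ▸ Real.holderTriple_inv_sub_inv hr hrr)
  · obtain rfl : r = r' := inv_injective (by linarith)
    simpa using h 1
  · have hrr : r' < r := (inv_lt_inv₀ hr hr').1 (by linarith [inv_strictAnti₀ hq' hgt])
    have hdiff' : r'⁻¹ - r⁻¹ = q'⁻¹ - q⁻¹ := by linarith
    exact h.finLpNorm_le_of_gt (Real.holderTriple_inv_sub_inv hq' hgt).symm
      (hdiff' ▸ Real.holderTriple_inv_sub_inv hr' hrr).symm

lemma of_forall_finLpNorm_le {𝕜 E G : Type*} [RCLike 𝕜] [NormedAddCommGroup E]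
    [NormedSpace 𝕜 E] [NormedAddCommGroup G] [NormedSpace 𝕜 G] (ψ : ι → E →L[𝕜] G)
    (hψ : ∀ x : ι → E, finLpNorm r (fun i => ‖ψ i (x i)‖₊) ≤ K * finLpNorm q (fun i => ‖x i‖₊))
    (x : ι → E) : ScaledDominated r q K (fun i => ‖ψ i (x i)‖₊) (fun i => ‖x i‖₊) := by
  intro t
  simpa [nnnorm_smul, Pi.mul_def] using hψ fun i => ((t i : ℝ) : 𝕜) • x i

end ScaledDominated

section WeakSumming

variable {𝕜 E F : Type*} [RCLike 𝕜] [NormedAddCommGroup E] [NormedSpace 𝕜 E]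
  [NormedAddCommGroup F] [NormedSpace 𝕜 F]

lemma weakNorm_nonneg {ι : Type*} [Fintype ι] (q : ℝ) (φ : ι → F →L[𝕜] 𝕜) :
    0 ≤ weakNorm q φ := by
  unfold weakNorm
  exact Real.iSup_nonneg fun _ => by positivity

def HasWeakSummingBound (pstar r q : ℝ) (T : E →L[𝕜] F) : Prop :=
  ∃ C ≥ 0, ∀ (m : ℕ) (x : Fin m → E) (φ : Fin m → F →L[𝕜] 𝕜),
    (∑ i, ‖φ i (T (x i))‖ ^ r) ^ (1 / r) ≤ C * (∑ i, ‖x i‖ ^ q) ^ (1 / q) * weakNorm pstar φ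

lemma HasWeakSummingBound.of_exponents {pstar r q r' q' : ℝ} {T : E →L[𝕜] F}
    (h : HasWeakSummingBound pstar r q T) (hr : 0 < r) (hq : 0 < q) (hr' : 0 < r')
    (hq' : 0 < q') (e : 1 / r = 1 / q + 1 / pstar) (e' : 1 / r' = 1 / q' + 1 / pstar) :
    HasWeakSummingBound pstar r' q' T := by
  obtain ⟨C, hC, hT⟩ := h
  refine ⟨C, hC, fun m x φ => ?_⟩
  let K : ℝ≥0 := ⟨C * weakNorm pstar φ, mul_nonneg hC (weakNorm_nonneg _ _)⟩
  have hKC : (K : ℝ) = C * weakNorm pstar φ := rfl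
  have hK : ∀ x : Fin m → E, finLpNorm r (fun i => ‖(φ i).comp T (x i)‖₊) ≤
      K * finLpNorm q (fun i => ‖x i‖₊) := fun x => by
    rw [← NNReal.coe_le_coe, NNReal.coe_mul, hKC, coe_finLpNorm_nnnorm, coe_finLpNorm_nnnorm]
    exact (hT m x φ).trans_eq (by ring)
  have := (ScaledDominated.of_forall_finLpNorm_le _ hK x).finLpNorm_le hr hq hr' hq' e e'
  rw [← NNReal.coe_le_coe, NNReal.coe_mul, hKC, coe_finLpNorm_nnnorm,
    coe_finLpNorm_nnnorm] at this
  exact this.trans_eq (by ring)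

end WeakSumming

theorem stmt7_general {𝕜 E F : Type*} [RCLike 𝕜]
    [NormedAddCommGroup E] [NormedSpace 𝕜 E]
    [NormedAddCommGroup F] [NormedSpace 𝕜 F]
    (pstar r₁ q₁ r₂ q₂ : ℝ)
    (hr₁ : 1 ≤ r₁) (hq₁ : 1 < q₁) (h₁ : 1 / r₁ = 1 / q₁ + 1 / pstar)
    (hr₂ : 1 ≤ r₂) (hq₂ : 1 < q₂) (h₂ : 1 / r₂ = 1 / q₂ + 1 / pstar)
    (T : E →L[𝕜] F) :
    (∃ C ≥ 0, ∀ (m : ℕ) (x : Fin m → E) (φ : Fin m → F →L[𝕜] 𝕜),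
        (∑ i, ‖φ i (T (x i))‖ ^ r₁) ^ (1 / r₁) ≤
          C * (∑ i, ‖x i‖ ^ q₁) ^ (1 / q₁) * weakNorm pstar φ)
    ↔ (∃ C ≥ 0, ∀ (m : ℕ) (x : Fin m → E) (φ : Fin m → F →L[𝕜] 𝕜),
        (∑ i, ‖φ i (T (x i))‖ ^ r₂) ^ (1 / r₂) ≤
          C * (∑ i, ‖x i‖ ^ q₂) ^ (1 / q₂) * weakNorm pstar φ) := by
  have hr₁' : 0 < r₁ := zero_lt_one.trans_le hr₁
  have hr₂' : 0 < r₂ := zero_lt_one.trans_le hr₂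
  have hq₁' : 0 < q₁ := zero_lt_one.trans hq₁
  have hq₂' : 0 < q₂ := zero_lt_one.trans hq₂
  exact ⟨fun h => HasWeakSummingBound.of_exponents h hr₁' hq₁' hr₂' hq₂' h₁ h₂,
    fun h => HasWeakSummingBound.of_exponents h hr₂' hq₂' hr₁' hq₁' h₂ h₁⟩

/-- For a fixed `p* ∈ (1,∞)`, and pairs `(r₁,q₁)`, `(r₂,q₂)` with `1/rₖ = 1/qₖ + 1/p*`,
a bounded linear operator satisfies the `(r₁,q₁)` summing inequality for some constant
iff it satisfies the `(r₂,q₂)` one for some constant. -/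
theorem stmt7 {𝕜 E F : Type*} [RCLike 𝕜]
    [NormedAddCommGroup E] [NormedSpace 𝕜 E] [CompleteSpace E]
    [NormedAddCommGroup F] [NormedSpace 𝕜 F] [CompleteSpace F]
    (pstar r₁ q₁ r₂ q₂ : ℝ) (hpstar : 1 < pstar)
    (hr₁ : 1 ≤ r₁) (hq₁ : 1 < q₁) (h₁ : 1 / r₁ = 1 / q₁ + 1 / pstar)
    (hr₂ : 1 ≤ r₂) (hq₂ : 1 < q₂) (h₂ : 1 / r₂ = 1 / q₂ + 1 / pstar)
    (T : E →L[𝕜] F) :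
    (∃ C ≥ 0, ∀ (m : ℕ) (x : Fin m → E) (φ : Fin m → F →L[𝕜] 𝕜),
        (∑ i, ‖φ i (T (x i))‖ ^ r₁) ^ (1 / r₁) ≤
          C * (∑ i, ‖x i‖ ^ q₁) ^ (1 / q₁) * weakNorm pstar φ)
    ↔ (∃ C ≥ 0, ∀ (m : ℕ) (x : Fin m → E) (φ : Fin m → F →L[𝕜] 𝕜),
        (∑ i, ‖φ i (T (x i))‖ ^ r₂) ^ (1 / r₂) ≤
          C * (∑ i, ‖x i‖ ^ q₂) ^ (1 / q₂) * weakNorm pstar φ) :=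
  stmt7_general pstar r₁ q₁ r₂ q₂ hr₁ hq₁ h₁ hr₂ hq₂ h₂ T
end

section
/- Let $E_1,\dots,E_n,F$ be Banach spaces (over the real or complex field), $1<p<\infty$, $1/p+1/p^*=1$, and $T:E_1\times\cdots\times E_n\to F$ a bounded $n$-linear operator. If $T$ is Cohen strongly $p$-summing with constant $C$, then $T$ is multiple Cohen strongly $p$-summing with the same constant $C$. Consequently every Cohen strongly $p$-summing $n$-linear operator is multiple Cohen strongly $p$-summing and $\|T\|_{mCoh,p}\le\|T\|_{Coh,p}$. -/
open scoped BigOperators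

/-- `T` is Cohen strongly `p`-summing with constant `C`. -/
def CohIneq (𝕜 : Type*) [RCLike 𝕜] {n : ℕ} {E : Fin n → Type*}
    [∀ k, NormedAddCommGroup (E k)] [∀ k, NormedSpace 𝕜 (E k)]
    {F : Type*} [NormedAddCommGroup F] [NormedSpace 𝕜 F]
    (p q : ℝ) (T : (∀ k, E k) → F) (C : ℝ) : Prop :=
  ∀ (m : ℕ) (x : ∀ k, Fin m → E k) (φ : Fin m → F →L[𝕜] 𝕜),
    ∑ i, ‖φ i (T (fun k => x k i))‖ ≤
      C * (∑ i, ∏ k, ‖x k i‖ ^ p) ^ (1 / p) * weakNorm q φ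

/-- `T` is multiple Cohen strongly `p`-summing with constant `C`. -/
def MCohIneq (𝕜 : Type*) [RCLike 𝕜] {n : ℕ} {E : Fin n → Type*}
    [∀ k, NormedAddCommGroup (E k)] [∀ k, NormedSpace 𝕜 (E k)]
    {F : Type*} [NormedAddCommGroup F] [NormedSpace 𝕜 F]
    (p q : ℝ) (T : (∀ k, E k) → F) (C : ℝ) : Prop :=
  ∀ (m : ℕ) (x : ∀ k, Fin m → E k) (φ : (Fin n → Fin m) → F →L[𝕜] 𝕜),
    ∑ α : Fin n → Fin m, ‖φ α (T (fun k => x k (α k)))‖ ≤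
      C * (∏ k, (∑ j, ‖x k j‖ ^ p) ^ (1 / p)) * weakNorm q φ

/-! The multiple Cohen inequality is the Cohen inequality applied to the family indexed by all
multi-indices `α : Fin n → Fin m`: the `p`-sum of `∏ k, ‖x k (α k)‖` over these multi-indices
factors as `∏ k, ∑ j, ‖x k j‖ ^ p`. -/

section

variable {𝕜 : Type*} [RCLike 𝕜] {F : Type*} [NormedAddCommGroup F] [NormedSpace 𝕜 F]

theorem weakNorm_comp_equiv {ι κ : Type*} [Fintype ι] [Fintype κ] (q : ℝ)
    (φ : ι → F →L[𝕜] 𝕜) (e : κ ≃ ι) : weakNorm q (φ ∘ e) = weakNorm q φ :=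
  iSup_congr fun y => by
    rw [← Equiv.sum_comp e (fun i => ‖φ i (y : F)‖ ^ q)]
    rfl

variable {n : ℕ} {E : Fin n → Type*} [∀ k, NormedAddCommGroup (E k)] [∀ k, NormedSpace 𝕜 (E k)]
  {p q C : ℝ} {T : (∀ k, E k) → F}

theorem CohIneq.of_fintype (h : CohIneq 𝕜 p q T C) {ι : Type*} [Fintype ι]
    (x : ∀ k, ι → E k) (φ : ι → F →L[𝕜] 𝕜) :
    ∑ i, ‖φ i (T fun k => x k i)‖ ≤ C * (∑ i, ∏ k, ‖x k i‖ ^ p) ^ (1 / p) * weakNorm q φ := by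
  let e := Fintype.equivFin ι
  have h_fin := h _ (fun k => x k ∘ e.symm) (φ ∘ e.symm)
  simp only [Function.comp_apply, weakNorm_comp_equiv] at h_fin
  rwa [Equiv.sum_comp e.symm (fun i => ‖φ i (T fun k => x k i)‖),
    Equiv.sum_comp e.symm (fun i => ∏ k, ‖x k i‖ ^ p)] at h_fin

theorem CohIneq.mCohIneq (h : CohIneq 𝕜 p q T C) : MCohIneq 𝕜 p q T C := by
  intro m x φ
  calc ∑ α : Fin n → Fin m, ‖φ α (T fun k => x k (α k))‖
      ≤ C * (∑ α : Fin n → Fin m, ∏ k, ‖x k (α k)‖ ^ p) ^ (1 / p) * weakNorm q φ :=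
        h.of_fintype (fun k α => x k (α k)) φ
    _ = C * (∏ k, (∑ j, ‖x k j‖ ^ p) ^ (1 / p)) * weakNorm q φ := by
        rw [← Fintype.prod_sum (fun k j => ‖x k j‖ ^ p),
          Real.finsetProd_rpow _ _ (fun k _ => by positivity)]

end

theorem stmt9_general {𝕜 : Type*} [RCLike 𝕜] {n : ℕ}
    {E : Fin n → Type*} [∀ k, NormedAddCommGroup (E k)] [∀ k, NormedSpace 𝕜 (E k)]
    {F : Type*} [NormedAddCommGroup F] [NormedSpace 𝕜 F]
    (p q : ℝ)
    (T : ContinuousMultilinearMap 𝕜 E F) (C : ℝ) (hC : 0 < C)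
    (h : CohIneq 𝕜 p q (⇑T) C) :
    MCohIneq 𝕜 p q (⇑T) C ∧
      sInf {D : ℝ | 0 ≤ D ∧ MCohIneq 𝕜 p q (⇑T) D} ≤
        sInf {D : ℝ | 0 ≤ D ∧ CohIneq 𝕜 p q (⇑T) D} := by
  refine ⟨h.mCohIneq, csInf_le_csInf ⟨0, fun D hD => hD.1⟩ ⟨C, hC.le, h⟩ ?_⟩
  rintro D ⟨hD_nonneg, hD⟩
  exact ⟨hD_nonneg, hD.mCohIneq⟩

/-- If a bounded `n`-linear operator `T` is Cohen strongly `p`-summing with constant `C`, then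
it is multiple Cohen strongly `p`-summing with the same constant `C`; consequently
`‖T‖_{mCoh,p} ≤ ‖T‖_{Coh,p}`. -/
theorem stmt9 {𝕜 : Type*} [RCLike 𝕜] {n : ℕ} (hn : 0 < n)
    {E : Fin n → Type*} [∀ k, NormedAddCommGroup (E k)] [∀ k, NormedSpace 𝕜 (E k)]
    [∀ k, CompleteSpace (E k)]
    {F : Type*} [NormedAddCommGroup F] [NormedSpace 𝕜 F] [CompleteSpace F]
    (p q : ℝ) (hp : 1 < p) (hq : 1 / p + 1 / q = 1)
    (T : ContinuousMultilinearMap 𝕜 E F) (C : ℝ) (hC : 0 < C)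
    (h : CohIneq 𝕜 p q (⇑T) C) :
    MCohIneq 𝕜 p q (⇑T) C ∧
      sInf {D : ℝ | 0 ≤ D ∧ MCohIneq 𝕜 p q (⇑T) D} ≤
        sInf {D : ℝ | 0 ≤ D ∧ CohIneq 𝕜 p q (⇑T) D} :=
  stmt9_general p q T C hC h
end
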